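/- arXiv:1708.00803 — 3 statements merged into one kernel-verified Lean document; each statement's English description precedes it below -/
import Mathlib

section
/- Let R ≥ r > 0 and let the plane p be parametrized as above with parameters ρ ≥ 0, α, φ. A point of the plane with plane coordinates (t, w) lies on the torus (√(x²+y²) − R)² + z² = r² if and only if (t² + w² + ρ² + R² − r²)² = 4R²(t² + (ρ cos φ − w sin φ)²). -/
theorem toric_section_equation (R r ρ α φ : ℝ) (hr : 0 < r) (hrR : r ≤ R) (hρ : 0 ≤ ρ)
    (t w : ℝ) :
    (Real.sqrt ((ρ * Real.cos α * Real.cos φ + t * Real.sin α - w * Real.cos α * Real.sin φ)^2 +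
          (ρ * Real.sin α * Real.cos φ - t * Real.cos α - w * Real.sin α * Real.sin φ)^2) - R)^2 +
        (ρ * Real.sin φ + w * Real.cos φ)^2 = r^2 ↔
    (t^2 + w^2 + ρ^2 + R^2 - r^2)^2 =
      4 * R^2 * (t^2 + (ρ * Real.cos φ - w * Real.sin φ)^2) := by
  set u := ρ * Real.cos α * Real.cos φ + t * Real.sin α - w * Real.cos α * Real.sin φ with hu
  set v := ρ * Real.sin α * Real.cos φ - t * Real.cos α - w * Real.sin α * Real.sin φ with hv
  have hca := Real.sin_sq_add_cos_sq α
  have hcf := Real.sin_sq_add_cos_sq φ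
  have huv : u^2 + v^2 = t^2 + (ρ * Real.cos φ - w * Real.sin φ)^2 := by
    rw [hu, hv]
    linear_combination (t^2 + (ρ * Real.cos φ - w * Real.sin φ)^2) * hca
  have hz : (ρ * Real.cos φ - w * Real.sin φ)^2 + (ρ * Real.sin φ + w * Real.cos φ)^2
      = ρ^2 + w^2 := by
    linear_combination (ρ^2 + w^2) * hcf
  set s := Real.sqrt (u^2 + v^2) with hsdef
  have hs0 : 0 ≤ s := Real.sqrt_nonneg _
  have hs2 : s^2 = u^2 + v^2 := Real.sq_sqrt (by positivity)
  have hR : 0 < R := lt_of_lt_of_le hr hrR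
  constructor
  · intro h
    have hA : t^2 + w^2 + ρ^2 + R^2 - r^2 = 2 * R * s := by
      linear_combination h - hs2 - huv - hz
    rw [hA]
    linear_combination 4*R^2*hs2 + 4*R^2*huv
  · intro h
    have h2 : (t^2 + w^2 + ρ^2 + R^2 - r^2 - 2*R*s) *
        (t^2 + w^2 + ρ^2 + R^2 - r^2 + 2*R*s) = 0 := by
      linear_combination h - 4*R^2*hs2 - 4*R^2*huv
    have hA : t^2 + w^2 + ρ^2 + R^2 - r^2 = 2 * R * s := by
      rcases mul_eq_zero.mp h2 with h3 | h3
      · linarith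
      · have hRr : 0 ≤ R^2 - r^2 := by nlinarith
        have hs' : 0 ≤ 2*R*s := by positivity
        linarith [sq_nonneg t, sq_nonneg w, sq_nonneg ρ]
    linear_combination hA + hs2 + huv + hz
end

section
/- Suppose real numbers x, y, z, ρ, φ, R, r with cos φ ≥ 0 satisfy x² = z² cos²φ − (ρ cos φ − y sin φ)² and (z − R/cos φ)² + (y + ρ tan φ)² = r²/cos²φ with z ≥ 0 and cos φ > 0. Then (x, y) satisfies the toric section equation (x² + y² + ρ² + R² − r²)² = 4R²(x² + (ρ cos φ − y sin φ)²). -/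
theorem conical_bridge_forward (x y z ρ φ R r : ℝ) (hcos : 0 < Real.cos φ) (hz : 0 ≤ z)
    (hcone : x^2 = z^2 * (Real.cos φ)^2 - (ρ * Real.cos φ - y * Real.sin φ)^2)
    (hcircle : (z - R / Real.cos φ)^2 + (y + ρ * Real.tan φ)^2 = r^2 / (Real.cos φ)^2) :
    (x^2 + y^2 + ρ^2 + R^2 - r^2)^2 =
      4 * R^2 * (x^2 + (ρ * Real.cos φ - y * Real.sin φ)^2) := by
  have hc := hcos.ne'
  rw [Real.tan_eq_sin_div_cos] at hcircle
  have hpyth := Real.sin_sq_add_cos_sq φ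
  have hcirc2 : (z * Real.cos φ - R)^2 + (y * Real.cos φ + ρ * Real.sin φ)^2 = r^2 := by
    field_simp at hcircle
    nlinarith [hcircle, sq_nonneg (Real.cos φ)]
  have key : x^2 + y^2 + ρ^2 + R^2 - r^2 = 2 * z * Real.cos φ * R := by
    nlinarith [hcirc2, hcone, hpyth]
  rw [key]
  nlinarith [hcone]
end

section
/- Conversely, if (x, y) satisfies (x² + y² + ρ² + R² − r²)² = 4R²(x² + (ρ cos φ − y sin φ)²) with cos φ > 0 and R > 0, then there exists z ≥ 0 such that x² = z² cos²φ − (ρ cos φ − y sin φ)² and ((z − R/cos φ)² + (y + ρ tan φ)² = r²/cos²φ or (z + R/cos φ)² + (y + ρ tan φ)² = r²/cos²φ). -/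
theorem conical_bridge_converse (x y ρ φ R r : ℝ) (hcos : 0 < Real.cos φ) (hR : 0 < R)
    (h : (x^2 + y^2 + ρ^2 + R^2 - r^2)^2 =
      4 * R^2 * (x^2 + (ρ * Real.cos φ - y * Real.sin φ)^2)) :
    ∃ z : ℝ, 0 ≤ z ∧
      x^2 = z^2 * (Real.cos φ)^2 - (ρ * Real.cos φ - y * Real.sin φ)^2 ∧
      ((z - R / Real.cos φ)^2 + (y + ρ * Real.tan φ)^2 = r^2 / (Real.cos φ)^2 ∨
        (z + R / Real.cos φ)^2 + (y + ρ * Real.tan φ)^2 = r^2 / (Real.cos φ)^2) := by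
  set c := Real.cos φ with hc
  set s := Real.sin φ with hs
  have hpy : s^2 + c^2 = 1 := Real.sin_sq_add_cos_sq φ
  have hcne : c ≠ 0 := ne_of_gt hcos
  have htan : Real.tan φ = s / c := Real.tan_eq_sin_div_cos φ
  set w := ρ * c - y * s with hw
  have hQ : 0 ≤ x^2 + w^2 := by positivity
  set q := Real.sqrt (x^2 + w^2) with hq
  have hq0 : 0 ≤ q := Real.sqrt_nonneg _
  have hq2 : q^2 = x^2 + w^2 := Real.sq_sqrt hQ
  refine ⟨q / c, by positivity, ?_, ?_⟩
  · field_simp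
    linarith [hq2]
  · have hq2' : q^2 = x^2 + (ρ * c - y * s)^2 := hq2
    have habs : |x^2 + y^2 + ρ^2 + R^2 - r^2| = 2 * R * q := by
      have : Real.sqrt ((x^2 + y^2 + ρ^2 + R^2 - r^2)^2)
          = Real.sqrt ((2 * R * q)^2) := by
        rw [h]; congr 1; nlinarith [hq2]
      rwa [Real.sqrt_sq_eq_abs, Real.sqrt_sq_eq_abs,
        abs_of_nonneg (by positivity : (0:ℝ) ≤ 2 * R * q)] at this
    rcases abs_cases (x^2 + y^2 + ρ^2 + R^2 - r^2) with ⟨he, _⟩ | ⟨he, _⟩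
    · left
      rw [habs] at he
      rw [htan]
      field_simp
      linear_combination hq2' - he + (y^2 + ρ^2) * hpy
    · right
      rw [habs] at he
      rw [htan]
      field_simp
      linear_combination hq2' + he + (y^2 + ρ^2) * hpy
end
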